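/- In every state with status Conflict(L, d̄) reachable from the initial state via the transition rules of basic Incremental Determinization, the clause L is implied by φ: every assignment to X ∪ Y that satisfies φ also satisfies L. -/
import Mathlib


/-! Basic framework: variables are `X ⊕ Y` where `X` are the universal and
`Y` the existential variables (this makes `X` and `Y` disjoint by construction). -/

/-- A literal: a variable together with a polarity. -/
abbrev Lit (X Y : Type) := (X ⊕ Y) × Bool

/-- A clause is a finite set of literals. -/
abbrev Clause (X Y : Type) := Finset (Lit X Y)

/-- A (total) assignment to all variables. Assignments "to a set `D` of variables"
are modelled as total assignments; all notions below only inspect the relevant variables. -/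
abbrev Assn (X Y : Type) := (X ⊕ Y) → Bool

/-- An assignment satisfies a literal if it maps its variable to its polarity. -/
def satLit {X Y : Type} (σ : Assn X Y) (l : Lit X Y) : Prop := σ l.1 = l.2

/-- An assignment satisfies a clause if it satisfies at least one of its literals. -/
def satClause {X Y : Type} (σ : Assn X Y) (c : Clause X Y) : Prop := ∃ l ∈ c, satLit σ l

/-- An assignment satisfies a clause set if it satisfies every clause in it. -/
def satCnf {X Y : Type} (σ : Assn X Y) (ψ : Set (Clause X Y)) : Prop := ∀ c ∈ ψ, satClause σ c

/-- The combined assignment `(xa, ya)`. -/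
def combine {X Y : Type} (xa : X → Bool) (ya : Y → Bool) : Assn X Y := Sum.elim xa ya

/-- The restriction of an assignment to the universal variables `X`. -/
def restrX {X Y : Type} (σ : Assn X Y) : X → Bool := fun x => σ (Sum.inl x)

/-- Truth of the 2QBF `∀X.∃Y.φ`: there is a Skolem function `f` such that for every
assignment `xa` to `X` the combined assignment `(xa, f(xa))` satisfies `φ`. -/
def qbfTrue {X Y : Type} (φ : Set (Clause X Y)) : Prop :=
  ∃ f : (X → Bool) → (Y → Bool), ∀ xa : X → Bool, satCnf (combine xa (f xa)) φ

/-- `v` has a unique Skolem function for domain `χ` in `ψ`: for every assignment `xa` to `X`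
satisfying `χ` there is exactly one Boolean `b` such that some assignment `ya` to the
existential variables with `ya v = b` makes `(xa, ya)` satisfy `ψ`. -/
def uniqueSkolem {X Y : Type} (ψ : Set (Clause X Y)) (χ : (X → Bool) → Prop) (v : Y) : Prop :=
  ∀ xa : X → Bool, χ xa →
    ∃! b : Bool, ∃ ya : Y → Bool, ya v = b ∧ satCnf (combine xa ya) ψ

/-- `C|_D`: the clauses of `C` all of whose variables lie in `D`. -/
def restrictC {X Y : Type} (C : Set (Clause X Y)) (D : Set (X ⊕ Y)) : Set (Clause X Y) :=
  {c ∈ C | ∀ l ∈ c, l.1 ∈ D}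

/-- Clause `c` has unique consequence `v` relative to `D`: it contains a literal of `v`
and all its other literals are of variables in `D`. -/
def hasUC {X Y : Type} (c : Clause X Y) (v : Y) (D : Set (X ⊕ Y)) : Prop :=
  (∃ b : Bool, (Sum.inr v, b) ∈ c) ∧ ∀ l ∈ c, l.1 ≠ Sum.inr v → l.1 ∈ D

/-- `U_v`: the clauses of `C` with unique consequence `v` relative to `D`. -/
def UC {X Y : Type} (C : Set (Clause X Y)) (v : Y) (D : Set (X ⊕ Y)) : Set (Clause X Y) :=
  {c ∈ C | hasUC c v D}

/-- `A_(v,b)`: some clause `c` in `U_v` contains the literal `(v, b)` and the assignment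
falsifies every literal of `c` other than the literals of `v`. -/
def Ant {X Y : Type} (C : Set (Clause X Y)) (v : Y) (D : Set (X ⊕ Y)) (b : Bool)
    (σ : Assn X Y) : Prop :=
  ∃ c ∈ UC C v D, (Sum.inr v, b) ∈ c ∧ ∀ l ∈ c, l.1 ≠ Sum.inr v → ¬ satLit σ l

/-- `deterministic(v, C, χ, D)`. -/
def deterministic {X Y : Type} (v : Y) (C : Set (Clause X Y)) (χ : (X → Bool) → Prop)
    (D : Set (X ⊕ Y)) : Prop :=
  ∀ σ : Assn X Y, satCnf σ (restrictC C D) → χ (restrX σ) →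
    Ant C v D true σ ∨ Ant C v D false σ

/-- `unconflicted(v, C, χ, D)`. -/
def unconflicted {X Y : Type} (v : Y) (C : Set (Clause X Y)) (χ : (X → Bool) → Prop)
    (D : Set (X ⊕ Y)) : Prop :=
  ∀ σ : Assn X Y, satCnf σ (restrictC C D) → χ (restrX σ) →
    ¬ (Ant C v D true σ ∧ Ant C v D false σ)

/-- `v` has a unique Skolem function relative to `D` for domain `χ` in `C`: for every
assignment to `D` satisfying `C|_D` whose restriction to `X` satisfies `χ`, there is exactly
one Boolean `b` such that extending the assignment by `v ↦ b` satisfies every clause of `U_v`. -/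
def uniqueSkolemRel {X Y : Type} [DecidableEq X] [DecidableEq Y] (v : Y)
    (C : Set (Clause X Y)) (χ : (X → Bool) → Prop) (D : Set (X ⊕ Y)) : Prop :=
  ∀ σ : Assn X Y, satCnf σ (restrictC C D) → χ (restrX σ) →
    ∃! b : Bool, satCnf (Function.update σ (Sum.inr v) b) (UC C v D)

/-! The state of the Incremental Determinization solver. -/

/-- The solver status. -/
inductive Status (X Y : Type) where
  | ready : Status X Y
  | conflict (L : Clause X Y) (d : Assn X Y) : Status X Y
  | sat : Status X Y
  | unsat : Status X Y

/-- A solver state `(S, C, D, χ, α)`: a status, a stack of clause sets, a stack of sets of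
variables, and two predicates on assignments to `X`. -/
structure IDState (X Y : Type) where
  status : Status X Y
  C : List (Set (Clause X Y))
  D : List (Set (X ⊕ Y))
  chi : (X → Bool) → Prop
  alpha : (X → Bool) → Prop

/-- The union of the elements of a stack of sets. -/
def stackUnion {β : Type} (S : List (Set β)) : Set β := {x | ∃ s ∈ S, x ∈ s}

/-- The first element (index 0) of a stack of sets. -/
def first {β : Type} (S : List (Set β)) : Set β := S.getD 0 ∅

/-- Add an element to the last set of a stack. -/
def addLast {β : Type} : List (Set β) → β → List (Set β)
  | [], v => [{v}]
  | [s], v => [insert v s]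
  | s :: t :: rest, v => s :: addLast (t :: rest) v

/-- Add an element to the first set of a stack. -/
def addFirst {β : Type} : List (Set β) → β → List (Set β)
  | [], x => [{x}]
  | s :: rest, x => insert x s :: rest

/-- The initial state `(Ready, ⟨φ⟩, ⟨X⟩, ⊤, ⊤)`. -/
def initState {X Y : Type} (φ : Set (Clause X Y)) : IDState X Y :=
  ⟨Status.ready, [φ], [Set.range Sum.inl], fun _ => True, fun _ => True⟩

/-- The transition rules of basic Incremental Determinization. -/
inductive Step {X Y : Type} [DecidableEq X] [DecidableEq Y] :
    IDState X Y → IDState X Y → Prop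

  | propagate (C : List (Set (Clause X Y))) (D : List (Set (X ⊕ Y)))
      (χ α : (X → Bool) → Prop) (v : Y)
      (hv : Sum.inr v ∉ stackUnion D)
      (hdet : deterministic v (stackUnion C) (fun xa => χ xa ∧ α xa) (stackUnion D))
      (hunc : unconflicted v (stackUnion C) (fun xa => χ xa ∧ α xa) (stackUnion D)) :
      Step ⟨Status.ready, C, D, χ, α⟩ ⟨Status.ready, C, addLast D (Sum.inr v), χ, α⟩
  | decide (C : List (Set (Clause X Y))) (D : List (Set (X ⊕ Y)))
      (χ α : (X → Bool) → Prop) (v : Y) (δ : Set (Clause X Y))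
      (hv : Sum.inr v ∉ stackUnion D) (hδfin : δ.Finite)
      (hδ : ∀ c ∈ δ, hasUC c v (stackUnion D)) :
      Step ⟨Status.ready, C, D, χ, α⟩ ⟨Status.ready, C ++ [δ], D ++ [∅], χ, α⟩
  | sat (C : List (Set (Clause X Y))) (D : List (Set (X ⊕ Y)))
      (χ : (X → Bool) → Prop)
      (hD : stackUnion D = Set.univ) :
      Step ⟨Status.ready, C, D, χ, fun _ => True⟩ ⟨Status.sat, C, D, χ, fun _ => True⟩
  | conflict (C : List (Set (Clause X Y))) (D : List (Set (X ⊕ Y)))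
      (χ α : (X → Bool) → Prop) (v : Y) (σ : Assn X Y)
      (hv : Sum.inr v ∉ stackUnion D)
      (hsat : satCnf σ (restrictC (stackUnion C) (stackUnion D)))
      (hχ : χ (restrX σ)) (hα : α (restrX σ))
      (ht : Ant (stackUnion C) v (stackUnion D) true σ)
      (hf : Ant (stackUnion C) v (stackUnion D) false σ) :
      Step ⟨Status.ready, C, D, χ, α⟩
        ⟨Status.conflict {(Sum.inr v, true), (Sum.inr v, false)} σ, C, D, χ, α⟩
  | analyze (C : List (Set (Clause X Y))) (D : List (Set (X ⊕ Y)))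
      (χ α : (X → Bool) → Prop) (L : Clause X Y) (σ : Assn X Y)
      (c : Clause X Y) (l : Lit X Y)
      (hc : c ∈ first C) (hl : l ∈ L) (hlc : (l.1, !l.2) ∈ c) :
      Step ⟨Status.conflict L σ, C, D, χ, α⟩
        ⟨Status.conflict (L.erase l ∪ c.erase (l.1, !l.2)) σ, C, D, χ, α⟩
  | learn (C : List (Set (Clause X Y))) (D : List (Set (X ⊕ Y)))
      (χ α : (X → Bool) → Prop) (L : Clause X Y) (σ : Assn X Y)
      (h : ∃ l ∈ L, l.1 ∉ stackUnion D) :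
      Step ⟨Status.conflict L σ, C, D, χ, α⟩ ⟨Status.ready, addFirst C L, D, χ, α⟩
  | unsat (C : List (Set (Clause X Y))) (D : List (Set (X ⊕ Y)))
      (χ α : (X → Bool) → Prop) (L : Clause X Y) (σ : Assn X Y)
      (hvars : ∀ l ∈ L, l.1 ∈ first D)
      (hfals : ∀ l ∈ L, ¬ satLit σ l) :
      Step ⟨Status.conflict L σ, C, D, χ, α⟩ ⟨Status.unsat, C, D, χ, α⟩
  | backtrack (S : Status X Y) (C : List (Set (Clause X Y))) (D : List (Set (X ⊕ Y)))
      (χ α : (X → Bool) → Prop) (k : ℕ) (h0 : 0 < k) (hk : k ≤ C.length) :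
      Step ⟨S, C, D, χ, α⟩ ⟨S, C.take k, D.take k, χ, α⟩

/-- Reachability from the initial state via the basic ID rules. -/
def Reachable {X Y : Type} [DecidableEq X] [DecidableEq Y] (φ : Set (Clause X Y))
    (s : IDState X Y) : Prop :=
  Relation.ReflTransGen Step (initState φ) s

section Aux
variable {X Y : Type}

/-- A clause is implied by φ. -/
def Implied (φ : Set (Clause X Y)) (c : Clause X Y) : Prop :=
  ∀ σ : Assn X Y, satCnf σ φ → satClause σ c

lemma first_append {β : Type} (C : List (Set β)) (δ : Set β) (h : C ≠ []) :
    first (C ++ [δ]) = first C := by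
  cases C with
  | nil => exact absurd rfl h
  | cons a t => rfl

lemma first_take {β : Type} (C : List (Set β)) (k : ℕ) (hk : 0 < k) :
    first (C.take k) = first C := by
  cases C with
  | nil => simp [first]
  | cons a t =>
    cases k with
    | zero => omega
    | succ n => rfl

lemma mem_first_addFirst {β : Type} {C : List (Set β)} {x y : β}
    (h : y ∈ first (addFirst C x)) : y = x ∨ y ∈ first C := by
  cases C with
  | nil =>
    simp [addFirst, first] at h
    exact Or.inl h
  | cons a t =>
    simp [addFirst, first] at h
    rcases h with h | h
    · exact Or.inl h
    · exact Or.inr h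

lemma resolve_implied [DecidableEq X] [DecidableEq Y] {φ : Set (Clause X Y)} {L c : Clause X Y} {l : Lit X Y}
    (hL : Implied φ L) (hc : Implied φ c) (hl : l ∈ L) (hlc : (l.1, !l.2) ∈ c) :
    Implied φ (L.erase l ∪ c.erase (l.1, !l.2)) := by
  intro σ hσ
  obtain ⟨l', hl'L, hl'⟩ := hL σ hσ
  by_cases he : l' = l
  · subst he
    obtain ⟨m, hmc, hm⟩ := hc σ hσ
    refine ⟨m, ?_, hm⟩
    refine Finset.mem_union_right _ (Finset.mem_erase.2 ⟨?_, hmc⟩)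
    rintro rfl
    simp [satLit] at hm hl'
    rw [hl'] at hm
    simp at hm
  · exact ⟨l', Finset.mem_union_left _ (Finset.mem_erase.2 ⟨he, hl'L⟩), hl'⟩

def IDInv [DecidableEq X] [DecidableEq Y] (φ : Set (Clause X Y)) (s : IDState X Y) : Prop :=
  s.C ≠ [] ∧ (∀ c ∈ first s.C, Implied φ c) ∧
  (∀ L d, s.status = Status.conflict L d → Implied φ L)

lemma step_inv [DecidableEq X] [DecidableEq Y] {φ : Set (Clause X Y)} {s t : IDState X Y}
    (hs : IDInv φ s) (hst : Step s t) : IDInv φ t := by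
  obtain ⟨hne, hfirst, hconf⟩ := hs
  cases hst with
  | propagate C D χ α v hv hdet hunc =>
    exact ⟨hne, hfirst, by rintro L d ⟨⟩⟩
  | decide C D χ α v δ hv hδfin hδ =>
    refine ⟨by simp, ?_, by rintro L d ⟨⟩⟩
    rw [show first (C ++ [δ]) = first C from first_append C δ hne]
    exact hfirst
  | sat C D χ hD => exact ⟨hne, hfirst, by rintro L d ⟨⟩⟩
  | conflict C D χ α v σ hv hsat hχ hα ht hf =>
    refine ⟨hne, hfirst, ?_⟩
    rintro L d ⟨⟩
    intro τ hτ
    cases h : τ (Sum.inr v) with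
    | true => exact ⟨(Sum.inr v, true), by simp, h⟩
    | false => exact ⟨(Sum.inr v, false), by simp, h⟩
  | analyze C D χ α L σ c l hc hl hlc =>
    refine ⟨hne, hfirst, ?_⟩
    rintro L' d ⟨⟩
    exact resolve_implied (hconf L σ rfl) (hfirst c hc) hl hlc
  | learn C D χ α L σ h =>
    refine ⟨by cases C <;> simp [addFirst], ?_, by rintro L' d ⟨⟩⟩
    intro c hcmem
    rcases mem_first_addFirst hcmem with rfl | hcm
    · exact hconf c σ rfl
    · exact hfirst c hcm
  | unsat C D χ α L σ hvars hfals => exact ⟨hne, hfirst, by rintro L' d ⟨⟩⟩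
  | backtrack S C D χ α k h0 hk =>
    refine ⟨?_, ?_, hconf⟩
    · intro h
      have := congrArg List.length h
      simp at this
      rcases this with h1 | h1
      · omega
      · exact hne h1
    · rw [first_take C k h0]
      exact hfirst

end Aux

/-- In every reachable state with status Conflict(L, d), the clause L is implied by φ. -/
theorem stmt_10 {X Y : Type} [Fintype X] [Fintype Y] [DecidableEq X] [DecidableEq Y]
    (φ : Set (Clause X Y)) (hφfin : φ.Finite)
    (hφY : ∀ c ∈ φ, ∃ l ∈ c, ∃ y : Y, l.1 = Sum.inr y) :
    ∀ s : IDState X Y, Reachable φ s →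
      ∀ (L : Clause X Y) (d : Assn X Y), s.status = Status.conflict L d →
        ∀ σ : Assn X Y, satCnf σ φ → satClause σ L := by
  intro s hreach
  have hinv : IDInv φ s := by
    induction hreach with
    | refl =>
      refine ⟨by simp [initState], ?_, by rintro L' d' ⟨⟩⟩
      intro c hc τ hτ
      exact hτ c hc
    | tail _ hstep ih => exact step_inv ih hstep
  intro L d hstat σ hσ
  exact hinv.2.2 L d hstat σ hσ
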